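/- arXiv:2111.06294 — 2 statements merged into one kernel-verified Lean document; each statement's English description precedes it below -/
import Mathlib

section
/- The shifted Heller constant in dimension 2 equals 6: (a) there exist a vector t ∈ [0,1)^2 \ {0} and a matrix A ∈ {-1,0,1}^{2×6} with pairwise distinct columns such that t+A is totally 1-submodular; and (b) for every t ∈ [0,1)^2 \ {0} and every A ∈ {-1,0,1}^{2×n} with pairwise distinct columns such that t+A is totally 1-submodular, one has n ≤ 6. -/
open Matrix

/-- Every `k×k` minor of `A` is at most `c` in absolute value. -/
def MinorsLE {m n : ℕ} (k : ℕ) (A : Matrix (Fin m) (Fin n) ℝ) (c : ℝ) : Prop :=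
  ∀ (f : Fin k ↪ Fin m) (g : Fin k ↪ Fin n), |(A.submatrix f g).det| ≤ c

/-- `A` is totally 1-submodular: all its minors, of any size, are at most `1`
in absolute value. -/
def Totally1Submodular {m n : ℕ} (A : Matrix (Fin m) (Fin n) ℝ) : Prop :=
  ∀ k : ℕ, MinorsLE k A 1

/-- The shifted matrix `t + A`, whose columns are `t + A_j`. -/
def shiftMat {m n : ℕ} (t : Fin m → ℝ) (A : Matrix (Fin m) (Fin n) ℝ) :
    Matrix (Fin m) (Fin n) ℝ :=
  Matrix.of fun i j => t i + A i j

/-- All entries of `A` lie in `{-1, 0, 1}`. -/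
def SignEntries {m n : ℕ} (A : Matrix (Fin m) (Fin n) ℝ) : Prop :=
  ∀ i j, A i j = -1 ∨ A i j = 0 ∨ A i j = 1

/-- The data admissible for the shifted Heller constant `h_s(m)`: a translation vector
`t ∈ [0,1)^m \ {0}` and a matrix `A ∈ {-1,0,1}^{m×n}` with pairwise distinct columns
such that `t + A` is totally 1-submodular. -/
def ShiftedAdmissible (m n : ℕ) (t : Fin m → ℝ) (A : Matrix (Fin m) (Fin n) ℝ) : Prop :=
  (∀ i, 0 ≤ t i ∧ t i < 1) ∧ t ≠ 0 ∧ SignEntries A ∧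
    Function.Injective A.transpose ∧ Totally1Submodular (shiftMat t A)

/-! A positive coordinate `t i` excludes the entry `1` from row `i` of `A`, because
`|t i + 1| > 1` would be a `1×1` minor of `t + A`; so the distinct columns of `A` lie in a set
of `2 * 3 ^ (m - 1)` sign vectors, which is `6` for `m = 2`. Conversely, for `t = (1/2, 0)` the
six columns `(-1, ε)` and `(0, ε)` give a shifted matrix with first row `±1/2` and second row
in `{-1, 0, 1}`, so each `2×2` minor is at most `1/2 + 1/2` in absolute value. -/

section Minors

variable {m n : ℕ}

theorem Totally1Submodular.abs_apply_le {M : Matrix (Fin m) (Fin n) ℝ}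
    (hM : Totally1Submodular M) (i : Fin m) (j : Fin n) : |M i j| ≤ 1 := by
  have h := hM 1 ⟨fun _ => i, fun _ _ _ => Subsingleton.elim _ _⟩
    ⟨fun _ => j, fun _ _ _ => Subsingleton.elim _ _⟩
  rwa [det_fin_one] at h

theorem abs_mul_sub_mul_le_of_abs_le {a b c d : ℝ} (ha : |a| ≤ 1 / 2) (hb : |b| ≤ 1 / 2)
    (hc : |c| ≤ 1) (hd : |d| ≤ 1) : |a * d - b * c| ≤ 1 := by
  have had : |a| * |d| ≤ 1 / 2 * 1 := mul_le_mul ha hd (abs_nonneg _) (by norm_num)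
  have hbc : |b| * |c| ≤ 1 / 2 * 1 := mul_le_mul hb hc (abs_nonneg _) (by norm_num)
  calc |a * d - b * c| ≤ |a * d| + |b * c| := abs_sub _ _
    _ = |a| * |d| + |b| * |c| := by rw [abs_mul, abs_mul]
    _ ≤ 1 := by linarith

theorem totally1Submodular_fin_two_of_abs_le (M : Matrix (Fin 2) (Fin n) ℝ)
    (h₀ : ∀ j, |M 0 j| ≤ 1 / 2) (h₁ : ∀ j, |M 1 j| ≤ 1) : Totally1Submodular M := by
  have hrow : ∀ i j, |M i j| ≤ 1 := by
    intro i j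
    fin_cases i
    · exact (h₀ j).trans (by norm_num)
    · exact h₁ j
  intro k f g
  have hk : k ≤ 2 := by simpa using Fintype.card_le_of_embedding f
  interval_cases k
  · simp
  · simpa using hrow (f 0) (g 0)
  · have hf : f 0 ≠ f 1 := f.injective.ne (by decide)
    rw [det_fin_two]
    simp only [submatrix_apply]
    obtain ⟨e₀, e₁⟩ | ⟨e₀, e₁⟩ : (f 0 = 0 ∧ f 1 = 1) ∨ (f 0 = 1 ∧ f 1 = 0) := by
      revert hf; generalize f 0 = a; generalize f 1 = b; revert a b; decide
    · rw [e₀, e₁]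
      exact abs_mul_sub_mul_le_of_abs_le (h₀ _) (h₀ _) (h₁ _) (h₁ _)
    · rw [e₀, e₁]
      convert abs_mul_sub_mul_le_of_abs_le (h₀ (g 1)) (h₀ (g 0)) (h₁ (g 1)) (h₁ (g 0)) using 2
      ring

end Minors

theorem ShiftedAdmissible.card_le {m n : ℕ} {t : Fin m → ℝ} {A : Matrix (Fin m) (Fin n) ℝ}
    (hA : ShiftedAdmissible m n t A) : n ≤ 2 * 3 ^ (m - 1) := by
  classical
  obtain ⟨ht, ht₀, hsign, hinj, hsub⟩ := hA
  obtain ⟨i₀, hi₀⟩ : ∃ i, t i ≠ 0 := by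
    by_contra! h
    exact ht₀ (funext h)
  have hpos : 0 < t i₀ := (ht i₀).1.lt_of_ne' hi₀
  have hrow : ∀ j, A i₀ j = -1 ∨ A i₀ j = 0 := by
    intro j
    have hle := (abs_le.mp (hsub.abs_apply_le i₀ j)).2
    simp only [shiftMat, of_apply] at hle
    rcases hsign i₀ j with h | h | h
    · exact .inl h
    · exact .inr h
    · linarith
  let S : Fin m → Finset ℝ := fun i => if i = i₀ then {-1, 0} else {-1, 0, 1}
  have hcol : ∀ j, Aᵀ j ∈ Fintype.piFinset S := by
    intro j
    rw [Fintype.mem_piFinset]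
    intro i
    by_cases h : i = i₀
    · subst h
      simpa [S] using hrow j
    · simpa [S, h] using hsign i j
  have hS : (Fintype.piFinset S).card = 2 * 3 ^ (m - 1) := by
    norm_num [S, apply_ite Finset.card, Finset.prod_ite, Finset.filter_ne', Finset.filter_eq',
      Finset.card_insert_of_notMem]
  calc n = Fintype.card (Fin n) := (Fintype.card_fin n).symm
    _ ≤ (Fintype.piFinset S).card :=
      Finset.card_le_card_of_injOn _ (fun j _ => hcol j) hinj.injOn
    _ = 2 * 3 ^ (m - 1) := hS

def extremalSignMatrix : Matrix (Fin 2) (Fin 6) ℤ := !![-1, -1, -1, 0, 0, 0; -1, 0, 1, -1, 0, 1]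

theorem shiftedAdmissible_extremalSignMatrix :
    ShiftedAdmissible 2 6 ![1 / 2, 0] (extremalSignMatrix.map (↑)) := by
  refine ⟨?_, ?_, ?_, ?_, ?_⟩
  · intro i
    fin_cases i <;> norm_num
  · intro h
    simpa using congrFun h 0
  · intro i j
    fin_cases i <;> fin_cases j <;> simp [extremalSignMatrix]
  · have hcols : ∀ a b : Fin 6, (∀ i, extremalSignMatrix i a = extremalSignMatrix i b) → a = b := by
      decide
    exact Int.cast_injective.comp_left.comp fun a b h => hcols a b (congrFun h)
  · apply totally1Submodular_fin_two_of_abs_le <;> intro j <;>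
      fin_cases j <;> norm_num [shiftMat, extremalSignMatrix, abs_le]

theorem stmt7 :
    (∃ (t : Fin 2 → ℝ) (A : Matrix (Fin 2) (Fin 6) ℝ), ShiftedAdmissible 2 6 t A) ∧
    (∀ (n : ℕ) (t : Fin 2 → ℝ) (A : Matrix (Fin 2) (Fin n) ℝ),
      ShiftedAdmissible 2 n t A → n ≤ 6) :=
  ⟨⟨_, _, shiftedAdmissible_extremalSignMatrix⟩, fun _ _ _ hA => hA.card_le⟩
end

section
/- Let Δ ≥ 1 and m > k ≥ 3 be integers and suppose that no Sauer Matrix S of size k admits a vector t ∈ [0,1)^k ∩ (1/Δ)ℤ^k \ {0} such that t+S is totally 1-submodular. Then for every t ∈ ([0,1)^m ∩ (1/Δ)ℤ^m) \ {0} and every A ∈ {-1,0,1}^{m×n} with pairwise distinct columns such that t+A is totally 1-submodular, one has n ≤ 2·(C(m,0)+C(m,1)+…+C(m,k−1)); that is, h_s^Δ(m) ≤ 2·Σ_{i=0}^{k−1} C(m,i). -/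
open Matrix

/-- A Sauer Matrix of size `k`: a `{-1,0,1}`-matrix of format `k × 2^k` having, for each
subset `E ⊆ {1,…,k}`, exactly one column whose support equals `E`. -/
def IsSauer {k : ℕ} (S : Matrix (Fin k) (Fin (2 ^ k)) ℝ) : Prop :=
  SignEntries S ∧ ∀ E : Set (Fin k), ∃! j : Fin (2 ^ k), ∀ i, S i j ≠ 0 ↔ i ∈ E

/-!
Group the columns of `A` by their supports. Two distinct columns with the same support are
opposite on every row where `t` vanishes, and `t` vanishes on some row of the support, so no
support carries three columns. The family of supports shatters no `k`-set `E`: columns realising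
all traces on `E` form a Sauer matrix of size `k` inside `A`. If `t` does not vanish on `E` this
is excluded by hypothesis; otherwise it contains an unshifted Sauer matrix of size `3`, and no
such matrix is totally 1-submodular. The Sauer–Shelah lemma then bounds the number of supports
by `∑_{i<k} C(m, i)`.
-/

open Finset

lemma Totally1Submodular.submatrix {m n p q : ℕ} {M : Matrix (Fin m) (Fin n) ℝ}
    (h : Totally1Submodular M) (f : Fin p ↪ Fin m) (g : Fin q ↪ Fin n) :
    Totally1Submodular (M.submatrix f g) := fun k f' g' =>
  h k (f'.trans f) (g'.trans g)

lemma Totally1Submodular.abs_le_one {m n : ℕ} {M : Matrix (Fin m) (Fin n) ℝ}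
    (h : Totally1Submodular M) (i : Fin m) (j : Fin n) : |M i j| ≤ 1 := by
  simpa using h 1 ⟨fun _ => i, Function.injective_of_subsingleton _⟩
    ⟨fun _ => j, Function.injective_of_subsingleton _⟩

def embFinTwo {α : Type*} {a b : α} (h : a ≠ b) : Fin 2 ↪ α :=
  ⟨![a, b], by intro x y; fin_cases x <;> fin_cases y <;> simp [h, h.symm]⟩

@[simps]
def embFinThree {α : Type*} {a b c : α} (hab : a ≠ b) (hac : a ≠ c) (hbc : b ≠ c) :
    Fin 3 ↪ α :=
  ⟨![a, b, c], by
    intro x y; fin_cases x <;> fin_cases y <;> simp [*, hab.symm, hac.symm, hbc.symm]⟩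

lemma Totally1Submodular.abs_mul_sub_mul_le_one {m n : ℕ} {M : Matrix (Fin m) (Fin n) ℝ}
    (h : Totally1Submodular M) {i i' : Fin m} {j j' : Fin n} (hi : i ≠ i') (hj : j ≠ j') :
    |M i j * M i' j' - M i j' * M i' j| ≤ 1 := by
  have h2 := h 2 (embFinTwo hi) (embFinTwo hj)
  rwa [det_fin_two] at h2

lemma shiftMat_zero {m n : ℕ} (A : Matrix (Fin m) (Fin n) ℝ) : shiftMat 0 A = A := by
  ext i j; simp [shiftMat]

lemma Totally1Submodular.shiftMat_submatrix {m n p q : ℕ} {t : Fin m → ℝ}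
    {A : Matrix (Fin m) (Fin n) ℝ} (h : Totally1Submodular (shiftMat t A))
    (f : Fin p ↪ Fin m) (g : Fin q ↪ Fin n) :
    Totally1Submodular (shiftMat (t ∘ f) (A.submatrix f g)) :=
  h.submatrix f g

lemma eq_of_sq_eq_one_of_abs_sub_le_one {x y : ℝ} (hx : x ^ 2 = 1) (hy : y ^ 2 = 1)
    (h : |x - y| ≤ 1) : x = y := by
  rcases sq_eq_one_iff.1 hx with rfl | rfl <;> rcases sq_eq_one_iff.1 hy with rfl | rfl <;>
    first | rfl | norm_num at h

lemma SignEntries.sq_eq_one {m n : ℕ} {A : Matrix (Fin m) (Fin n) ℝ} (hA : SignEntries A)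
    {i : Fin m} {j : Fin n} (h : A i j ≠ 0) : A i j ^ 2 = 1 := by
  rcases hA i j with h' | h' | h' <;> simp_all

noncomputable def colSupport {m n : ℕ} (A : Matrix (Fin m) (Fin n) ℝ) (j : Fin n) :
    Finset (Fin m) :=
  {i | A i j ≠ 0}

@[simp]
lemma mem_colSupport {m n : ℕ} {A : Matrix (Fin m) (Fin n) ℝ} {i : Fin m} {j : Fin n} :
    i ∈ colSupport A j ↔ A i j ≠ 0 := by
  simp [colSupport]

section Columns

variable {m n : ℕ} {t : Fin m → ℝ} {A : Matrix (Fin m) (Fin n) ℝ}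

lemma shift_eq_zero_of_entry_eq_one (hTU : Totally1Submodular (shiftMat t A)) {i : Fin m}
    {j : Fin n} (ht : 0 ≤ t i) (h : A i j = 1) : t i = 0 := by
  have := hTU.abs_le_one i j
  simp only [shiftMat, of_apply, h, abs_le] at this
  linarith

lemma eq_neg_of_colSupport_eq (hA : SignEntries A) (ht : ∀ i, 0 ≤ t i)
    (hTU : Totally1Submodular (shiftMat t A)) {j j' : Fin n} (hjj' : j ≠ j')
    (hsupp : colSupport A j = colSupport A j') (hne : Aᵀ j ≠ Aᵀ j') :
    ∃ i₀, t i₀ = 0 ∧ A i₀ j ≠ 0 ∧ ∀ i, t i = 0 → A i j' = -A i j := by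
  have hzero (i : Fin m) : A i j = 0 ↔ A i j' = 0 :=
    not_iff_not.1 (by simpa using Finset.ext_iff.1 hsupp i)
  have hsign (i : Fin m) (h : A i j ≠ 0) : A i j' = A i j ∨ A i j' = -A i j :=
    sq_eq_sq_iff_eq_or_eq_neg.1 ((hA.sq_eq_one (mt (hzero i).2 h)).trans (hA.sq_eq_one h).symm)
  obtain ⟨i₀, hi₀⟩ := Function.ne_iff.1 hne
  simp only [transpose_apply] at hi₀
  have h₀ : A i₀ j ≠ 0 := fun h => hi₀ (h.trans ((hzero i₀).1 h).symm)
  have hopp₀ : A i₀ j' = -A i₀ j := (hsign i₀ h₀).resolve_left (Ne.symm hi₀)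
  have ht₀ : t i₀ = 0 := by
    rcases hA i₀ j with h | h | h
    · exact shift_eq_zero_of_entry_eq_one hTU (ht i₀) (j := j') (by rw [hopp₀, h, neg_neg])
    · exact absurd h h₀
    · exact shift_eq_zero_of_entry_eq_one hTU (ht i₀) h
  refine ⟨i₀, ht₀, h₀, fun i hti => ?_⟩
  by_cases hi : A i j = 0
  · rw [hi, neg_zero]; exact (hzero i).1 hi
  refine (hsign i hi).resolve_left fun hsame_i => ?_
  have hii₀ : i ≠ i₀ := by rintro rfl; exact hi₀ hsame_i.symm
  -- in the rows `i, i₀` the columns `j, j'` read `(a, a)` and `(b, -b)`: a minor `-2ab`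
  have hminor := hTU.abs_mul_sub_mul_le_one hii₀ hjj'
  simp only [shiftMat, of_apply, hti, ht₀, zero_add, hsame_i, hopp₀] at hminor
  have hprod := eq_of_sq_eq_one_of_abs_sub_le_one
    (by simp [mul_pow, hA.sq_eq_one hi, hA.sq_eq_one h₀])
    (by simp [mul_pow, hA.sq_eq_one hi, hA.sq_eq_one h₀]) hminor
  exact mul_ne_zero hi h₀ (by linarith)

lemma card_filter_colSupport_eq_le_two (hA : SignEntries A) (ht : ∀ i, 0 ≤ t i)
    (hTU : Totally1Submodular (shiftMat t A)) (hinj : Function.Injective Aᵀ)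
    (w : Finset (Fin m)) : #{j | colSupport A j = w} ≤ 2 := by
  by_contra! h
  obtain ⟨j₁, h₁, j₂, h₂, j₃, h₃, h₁₂, h₁₃, h₂₃⟩ := two_lt_card.1 h
  simp only [mem_filter, mem_univ, true_and] at h₁ h₂ h₃
  have hopp {j j' : Fin n} (hjj' : j ≠ j') (hsupp : colSupport A j = colSupport A j') :=
    eq_neg_of_colSupport_eq hA ht hTU hjj' hsupp (hinj.ne hjj')
  obtain ⟨i, hti, hi, h₁₂'⟩ := hopp h₁₂ (h₁.trans h₂.symm)
  obtain ⟨-, -, -, h₁₃'⟩ := hopp h₁₃ (h₁.trans h₃.symm)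
  obtain ⟨-, -, -, h₂₃'⟩ := hopp h₂₃ (h₂.trans h₃.symm)
  have h₂₃i := h₂₃' i hti
  rw [h₁₂' i hti, h₁₃' i hti, neg_neg] at h₂₃i
  exact hi (by linarith)

end Columns

lemma isSauer_of_bijective {k : ℕ} {S : Matrix (Fin k) (Fin (2 ^ k)) ℝ} (hS : SignEntries S)
    (h : Function.Bijective (colSupport S)) : IsSauer S := by
  classical
  refine ⟨hS, fun E => ?_⟩
  obtain ⟨j, hj⟩ := h.2 E.toFinset
  refine ⟨j, fun i => by simp [← mem_colSupport, hj], fun j' hj' => h.1 (hj ▸ ?_)⟩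
  ext i
  simp [hj']

lemma exists_isSauer_submatrix_of_shatters {m n p : ℕ} {A : Matrix (Fin m) (Fin n) ℝ}
    (hA : SignEntries A) {E : Finset (Fin m)} (hE : (univ.image (colSupport A)).Shatters E)
    (hcard : #E = p) :
    ∃ g : Fin (2 ^ p) ↪ Fin n, IsSauer (A.submatrix (E.orderEmbOfFin hcard) g) := by
  set ι := E.orderEmbOfFin hcard
  have hιE (a : Fin p) : ι a ∈ E := orderEmbOfFin_mem E hcard a
  have hcol (F : Finset (Fin p)) : ∃ j, E ∩ colSupport A j = F.map ι.toEmbedding := by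
    obtain ⟨u, hu, huF⟩ := hE (t := F.map ι.toEmbedding) fun x hx => by
      obtain ⟨a, -, rfl⟩ := mem_map.1 hx
      exact hιE a
    obtain ⟨j, -, rfl⟩ := mem_image.1 hu
    exact ⟨j, huF⟩
  choose col hcol using hcol
  let ψ : Fin (2 ^ p) ≃ Finset (Fin p) := (Fintype.equivFinOfCardEq (by simp)).symm
  have hsupp (c : Fin (2 ^ p)) : colSupport (A.submatrix ι (col ∘ ψ)) c = ψ c := by
    ext i
    simpa [hιE] using Finset.ext_iff.1 (hcol (ψ c)) (ι i)
  have hinj : Function.Injective (col ∘ ψ) := fun c c' h => ψ.injective <| by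
    rw [← hsupp, ← hsupp]
    ext i
    simp only [Function.comp_apply] at h
    simp [h]
  refine ⟨⟨col ∘ ψ, hinj⟩, isSauer_of_bijective (fun i c => hA _ _) ?_⟩
  convert ψ.bijective
  exact funext hsupp

lemma IsSauer.not_totally1Submodular {S : Matrix (Fin 3) (Fin (2 ^ 3)) ℝ} (hS : IsSauer S) :
    ¬ Totally1Submodular S := by
  intro hTU
  obtain ⟨a, ha, -⟩ := hS.2 {0, 1}
  obtain ⟨b, hb, -⟩ := hS.2 {0, 2}
  obtain ⟨d, hd, -⟩ := hS.2 {1, 2}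
  obtain ⟨s, hs, -⟩ := hS.2 Set.univ
  obtain ⟨ha₀, ha₁, ha₂⟩ : S 0 a ≠ 0 ∧ S 1 a ≠ 0 ∧ S 2 a = 0 := by
    simpa [Fin.forall_fin_succ] using ha
  obtain ⟨hb₀, hb₁, hb₂⟩ : S 0 b ≠ 0 ∧ S 1 b = 0 ∧ S 2 b ≠ 0 := by
    simpa [Fin.forall_fin_succ] using hb
  obtain ⟨hd₀, hd₁, hd₂⟩ : S 0 d = 0 ∧ S 1 d ≠ 0 ∧ S 2 d ≠ 0 := by
    simpa [Fin.forall_fin_succ] using hd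
  obtain ⟨hs₀, hs₁, hs₂⟩ : S 0 s ≠ 0 ∧ S 1 s ≠ 0 ∧ S 2 s ≠ 0 := by
    simpa [Fin.forall_fin_succ] using hs
  have hsq {i j} (h : S i j ≠ 0) := hS.1.sq_eq_one h
  have hsa : s ≠ a := by rintro rfl; exact hs₂ ha₂
  have hsb : s ≠ b := by rintro rfl; exact hs₁ hb₁
  have hsd : s ≠ d := by rintro rfl; exact hs₀ hd₀
  have hab : a ≠ b := by rintro rfl; exact ha₁ hb₁
  have had : a ≠ d := by rintro rfl; exact ha₀ hd₀
  have hbd : b ≠ d := by rintro rfl; exact hb₀ hd₀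
  have h₁ := hTU.abs_mul_sub_mul_le_one (i := 0) (i' := 1) (by decide) hsa
  have h₂ := hTU.abs_mul_sub_mul_le_one (i := 0) (i' := 2) (by decide) hsb
  have h₃ := hTU.abs_mul_sub_mul_le_one (i := 1) (i' := 2) (by decide) hsd
  have h₄ : |-(S 0 a * S 1 d * S 2 b) - S 0 b * S 1 a * S 2 d| ≤ 1 := by
    simpa [det_fin_three, ha₂, hb₁, hd₀] using
      hTU 3 (Function.Embedding.refl _) (embFinThree hab had hbd)
  have e₁ := eq_of_sq_eq_one_of_abs_sub_le_one (by simp [mul_pow, hsq hs₀, hsq ha₁])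
    (by simp [mul_pow, hsq ha₀, hsq hs₁]) h₁
  have e₂ := eq_of_sq_eq_one_of_abs_sub_le_one (by simp [mul_pow, hsq hs₀, hsq hb₂])
    (by simp [mul_pow, hsq hb₀, hsq hs₂]) h₂
  have e₃ := eq_of_sq_eq_one_of_abs_sub_le_one (by simp [mul_pow, hsq hs₁, hsq hd₂])
    (by simp [mul_pow, hsq hd₁, hsq hs₂]) h₃
  have e₄ := eq_of_sq_eq_one_of_abs_sub_le_one (by simp [mul_pow, hsq ha₀, hsq hd₁, hsq hb₂])
    (by simp [mul_pow, hsq hb₀, hsq ha₁, hsq hd₂]) h₄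
  -- as `S i s ^ 2 = 1`, the 2×2 minors through `s` make the two terms of the 3×3 minor
  -- equal, while `e₄` makes them opposite
  grind [hsq hs₀, hsq hs₁, hsq hs₂, hsq ha₀, hsq hd₁, hsq hb₂]

lemma card_le_sum_choose_of_not_shatters {α : Type*} [Fintype α] [DecidableEq α]
    {𝒜 : Finset (Finset α)} {k : ℕ} (h : ∀ s : Finset α, #s = k → ¬ 𝒜.Shatters s) :
    #𝒜 ≤ ∑ i ∈ range k, (Fintype.card α).choose i := by
  have hsub : 𝒜.shatterer ⊆ (range k).biUnion fun i => powersetCard i univ := by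
    intro s hs
    refine mem_biUnion.2
      ⟨#s, mem_range.2 (lt_of_not_ge fun hks => ?_), mem_powersetCard_univ.2 rfl⟩
    obtain ⟨u, hus, hu⟩ := exists_subset_card_eq hks
    exact h u hu ((mem_shatterer.1 hs).mono_right hus)
  calc #𝒜 ≤ #𝒜.shatterer := card_le_card_shatterer 𝒜
    _ ≤ ∑ i ∈ range k, #(powersetCard i (univ : Finset α)) :=
      (card_le_card hsub).trans card_biUnion_le
    _ = ∑ i ∈ range k, (Fintype.card α).choose i := by simp [card_powersetCard]

lemma not_shatters_colSupport {Δ m n k : ℕ} (hk : 3 ≤ k)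
    (hSauer : ∀ S : Matrix (Fin k) (Fin (2 ^ k)) ℝ, IsSauer S →
      ∀ r : Fin k → ℝ, (∀ i, 0 ≤ r i ∧ r i < 1) →
        (∀ i, ∃ z : ℤ, (Δ : ℝ) * r i = (z : ℝ)) → r ≠ 0 →
          ¬ Totally1Submodular (shiftMat r S))
    {t : Fin m → ℝ} {A : Matrix (Fin m) (Fin n) ℝ} (hA : SignEntries A)
    (h01 : ∀ i, 0 ≤ t i ∧ t i < 1) (ht : ∀ i, ∃ z : ℤ, (Δ : ℝ) * t i = (z : ℝ))
    (hTU : Totally1Submodular (shiftMat t A)) {E : Finset (Fin m)} (hE : #E = k) :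
    ¬ (univ.image (colSupport A)).Shatters E := by
  intro hsh
  by_cases hvan : ∀ i ∈ E, t i = 0
  · obtain ⟨E₃, hE₃, hcard⟩ := exists_subset_card_eq (hk.trans hE.ge)
    obtain ⟨g, hS⟩ := exists_isSauer_submatrix_of_shatters hA (hsh.mono_right hE₃) hcard
    have hr : t ∘ E₃.orderEmbOfFin hcard = 0 :=
      funext fun a => hvan _ (hE₃ (orderEmbOfFin_mem E₃ hcard a))
    have := hTU.shiftMat_submatrix (E₃.orderEmbOfFin hcard).toEmbedding g
    rw [RelEmbedding.coe_toEmbedding, hr, shiftMat_zero] at this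
    exact hS.not_totally1Submodular this
  · push Not at hvan
    obtain ⟨i, hi, hti⟩ := hvan
    obtain ⟨g, hS⟩ := exists_isSauer_submatrix_of_shatters hA hsh hE
    refine hSauer _ hS _ (fun a => h01 _) (fun a => ht _) ?_
      (hTU.shiftMat_submatrix (E.orderEmbOfFin hE).toEmbedding g)
    rw [← mem_coe, ← range_orderEmbOfFin E hE] at hi
    obtain ⟨a, rfl⟩ := hi
    exact fun h => hti (congrFun h a)

theorem stmt12_general (Δ m k : ℕ) (hk : 3 ≤ k)
    (hSauer : ∀ S : Matrix (Fin k) (Fin (2 ^ k)) ℝ, IsSauer S →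
      ∀ r : Fin k → ℝ, (∀ i, 0 ≤ r i ∧ r i < 1) →
        (∀ i, ∃ z : ℤ, (Δ : ℝ) * r i = (z : ℝ)) → r ≠ 0 →
          ¬ Totally1Submodular (shiftMat r S))
    (n : ℕ) (t : Fin m → ℝ) (A : Matrix (Fin m) (Fin n) ℝ)
    (ht : ∀ i, ∃ z : ℤ, (Δ : ℝ) * t i = (z : ℝ))
    (hadm : ShiftedAdmissible m n t A) :
    n ≤ 2 * ∑ i ∈ Finset.range k, m.choose i := by
  obtain ⟨h01, -, hA, hinj, hTU⟩ := hadm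
  have hfibers : n ≤ 2 * #(univ.image (colSupport A)) := by
    simpa using card_le_mul_card_image univ 2 fun w _ =>
      card_filter_colSupport_eq_le_two hA (fun i => (h01 i).1) hTU hinj w
  have hsupports : #(univ.image (colSupport A)) ≤ ∑ i ∈ range k, m.choose i := by
    simpa using card_le_sum_choose_of_not_shatters fun E hE =>
      not_shatters_colSupport hk hSauer hA h01 ht hTU hE
  omega

theorem stmt12 (Δ m k : ℕ) (hΔ : 1 ≤ Δ) (hk : 3 ≤ k) (hmk : k < m)
    (hSauer : ∀ S : Matrix (Fin k) (Fin (2 ^ k)) ℝ, IsSauer S →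
      ∀ r : Fin k → ℝ, (∀ i, 0 ≤ r i ∧ r i < 1) →
        (∀ i, ∃ z : ℤ, (Δ : ℝ) * r i = (z : ℝ)) → r ≠ 0 →
          ¬ Totally1Submodular (shiftMat r S))
    (n : ℕ) (t : Fin m → ℝ) (A : Matrix (Fin m) (Fin n) ℝ)
    (ht : ∀ i, ∃ z : ℤ, (Δ : ℝ) * t i = (z : ℝ))
    (hadm : ShiftedAdmissible m n t A) :
    n ≤ 2 * ∑ i ∈ Finset.range k, m.choose i :=
  stmt12_general Δ m k hk hSauer n t A ht hadm
end
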